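/- Let G be a symmetric n×n integer matrix with det G ≠ 0, and suppose M ∈ Mₙ(ℤ) has odd determinant and MᵀGM is the block diagonal matrix with diagonal blocks G₁ and 2·G₂, where G₁ is a symmetric n₂×n₂ integer matrix with odd determinant and G₂ is a symmetric (n−n₂)×(n−n₂) integer matrix. Then the number of cosets r + ℤⁿ with r ∈ sh(G) and 2r ∈ ℤⁿ (the elements of order dividing 2 in sh(G)/ℤⁿ) equals 2^{n−n₂}. -/

import Mathlib

open Matrix

/-- The shadow of a nondegenerate integral lattice with Gram matrix `G`:
`sh(G) = {r ∈ ℚⁿ : rᵀGx − xᵀGx/2 ∈ ℤ for all x ∈ ℤⁿ}`. -/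
def latticeShadow {n : ℕ} (G : Matrix (Fin n) (Fin n) ℤ) : Set (Fin n → ℚ) :=
  {r | ∀ x : Fin n → ℤ, ∃ m : ℤ,
    r ⬝ᵥ (G.map (Int.cast : ℤ → ℚ)).mulVec (fun i => (x i : ℚ))
      - ((fun i => (x i : ℚ)) ⬝ᵥ (G.map (Int.cast : ℤ → ℚ)).mulVec (fun i => (x i : ℚ))) / 2
      = (m : ℚ)}

/-- A rational vector is integral if all its coordinates are integers. -/
def IsIntVec {n : ℕ} (v : Fin n → ℚ) : Prop := ∀ i, ∃ m : ℤ, v i = (m : ℚ)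

/-!
Write a half-integral vector as `r = v / 2` with `v ∈ ℤⁿ`. The shadow condition for `r` says
`vᵀGx ≡ xᵀGx (mod 2)` for all `x`, and over `𝔽₂` the quadratic form of a symmetric matrix is
the linear form `x ↦ diag(G) ⬝ x`. Hence `v / 2 ∈ sh(G)` iff `v mod 2` is a characteristic
vector of `Ḡ = G mod 2`, i.e. `Ḡ v̄ = diag Ḡ`, and two such `r` lie in the same coset of `ℤⁿ`
iff their `v mod 2` agree: the cosets are counted by the characteristic vectors of `Ḡ`.

Modulo 2 the hypothesis reads `M̄ᵀ Ḡ M̄ = Ḡ₁ ⊕ 0` with `M̄`, `Ḡ₁` invertible. Since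
`diag(PᵀAP) = Pᵀ diag A` over `𝔽₂`, `M̄` maps the characteristic vectors of `Ḡ₁ ⊕ 0`
bijectively onto those of `Ḡ`, and the former are the vectors `(Ḡ₁⁻¹ diag Ḡ₁, y)` with
`y ∈ 𝔽₂^(n - n₂)` arbitrary.
-/

section CharTwo

variable {ι R : Type*} [Fintype ι] [CommRing R] [CharP R 2]

theorem sum_sum_eq_sum_diag_of_symm (f : ι → ι → R) (hf : ∀ i j, f i j = f j i) :
    ∑ i, ∑ j, f i j = ∑ i, f i i := by
  classical
  have hoff : ∑ p ∈ (Finset.univ : Finset ι).offDiag, f p.1 p.2 = 0 :=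
    Finset.sum_involution (fun p _ => p.swap)
      (fun p _ => by simp [hf p.2 p.1, CharTwo.add_self_eq_zero])
      (fun p hp _ => by simpa [Prod.ext_iff, eq_comm] using hp)
      (fun p hp => by simpa [eq_comm] using hp) (fun p _ => p.swap_swap)
  rw [← Finset.sum_product', ← Finset.diag_union_offDiag,
    Finset.sum_union (Finset.disjoint_diag_offDiag _), hoff, add_zero, Finset.sum_diag]

theorem dotProduct_mulVec_self_of_isSymm {A : Matrix ι ι R} (hA : A.IsSymm) (x : ι → R) :
    x ⬝ᵥ A *ᵥ x = ∑ i, A i i * x i ^ 2 := by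
  simp only [dotProduct, mulVec, Finset.mul_sum]
  rw [sum_sum_eq_sum_diag_of_symm _ fun i j => by rw [hA.apply i j]; ring]
  exact Finset.sum_congr rfl fun i _ => by ring

end CharTwo

theorem Set.ncard_preimage_of_bijective {α β : Type*} {f : α → β} (hf : f.Bijective)
    (s : Set β) : (f ⁻¹' s).ncard = s.ncard := by
  rw [Set.ncard_def, Set.ncard_def, Set.encard_preimage_of_bijective hf]

def characteristicVectors {ι : Type*} [Fintype ι] (A : Matrix ι ι (ZMod 2)) :
    Set (ι → ZMod 2) :=
  {w | A *ᵥ w = A.diag}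

section ZModTwo

variable {ι κ : Type*} [Fintype ι]

theorem dotProduct_mulVec_self_eq_diag_dotProduct {A : Matrix ι ι (ZMod 2)} (hA : A.IsSymm)
    (x : ι → ZMod 2) : x ⬝ᵥ A *ᵥ x = A.diag ⬝ᵥ x := by
  rw [dotProduct_mulVec_self_of_isSymm hA]
  simp only [ZMod.pow_card, dotProduct, diag]

theorem diag_transpose_mul_mul {A : Matrix ι ι (ZMod 2)} (hA : A.IsSymm)
    (P : Matrix ι κ (ZMod 2)) : (Pᵀ * A * P).diag = Pᵀ *ᵥ A.diag := by
  ext j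
  have h : (Pᵀ * A * P).diag j = (fun k => P k j) ⬝ᵥ A *ᵥ fun k => P k j := by
    simp only [diag, mul_apply, dotProduct, mulVec, transpose_apply, Finset.sum_mul,
      Finset.mul_sum, mul_assoc]
    exact Finset.sum_comm
  rw [h, dotProduct_mulVec_self_eq_diag_dotProduct hA, dotProduct_comm]
  rfl

theorem characteristicVectors_submatrix [Fintype κ] (A : Matrix κ κ (ZMod 2)) (e : ι ≃ κ) :
    characteristicVectors (A.submatrix e e) =
      e.arrowCongr (.refl _) ⁻¹' characteristicVectors A := by
  ext w
  simp only [characteristicVectors, Set.mem_preimage, Set.mem_ofPred_eq, submatrix_mulVec_equiv,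
    diag_submatrix]
  exact e.surjective.injective_comp_right.eq_iff

variable [DecidableEq ι]

theorem characteristicVectors_transpose_mul_mul {A : Matrix ι ι (ZMod 2)} (hA : A.IsSymm)
    {P : Matrix ι ι (ZMod 2)} (hP : IsUnit P.det) :
    characteristicVectors (Pᵀ * A * P) = P.mulVec ⁻¹' characteristicVectors A := by
  ext w
  simp only [characteristicVectors, Set.mem_preimage, Set.mem_ofPred_eq]
  rw [diag_transpose_mul_mul hA, Matrix.mul_assoc, ← mulVec_mulVec, ← mulVec_mulVec]
  exact (mulVec_injective_of_isUnit
    ((isUnit_iff_isUnit_det _).mpr (isUnit_det_transpose _ hP))).eq_iff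

theorem characteristicVectors_fromBlocks_zero {κ₁ κ₂ : Type*} [Fintype κ₁] [DecidableEq κ₁]
    [Fintype κ₂] {G₁ : Matrix κ₁ κ₁ (ZMod 2)} (hG₁ : IsUnit G₁.det) :
    characteristicVectors (fromBlocks G₁ 0 0 0 : Matrix (κ₁ ⊕ κ₂) (κ₁ ⊕ κ₂) (ZMod 2)) =
      Set.range (Sum.elim (G₁⁻¹ *ᵥ G₁.diag)) := by
  ext u
  obtain ⟨a, b, rfl⟩ : ∃ a b, u = Sum.elim a b :=
    ⟨u ∘ Sum.inl, u ∘ Sum.inr, (Sum.elim_comp_inl_inr u).symm⟩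
  have hsolve : G₁ *ᵥ a = G₁.diag ↔ G₁⁻¹ *ᵥ G₁.diag = a := by
    constructor
    · rintro h
      rw [← h, mulVec_mulVec, nonsing_inv_mul _ hG₁, one_mulVec]
    · rintro rfl
      rw [mulVec_mulVec, mul_nonsing_inv _ hG₁, one_mulVec]
  have hdiag : (fromBlocks G₁ 0 0 0 : Matrix (κ₁ ⊕ κ₂) (κ₁ ⊕ κ₂) (ZMod 2)).diag =
      Sum.elim G₁.diag 0 := by
    ext (i | i) <;> rfl
  simp [characteristicVectors, fromBlocks_mulVec, hdiag, Sum.elim_eq_iff, hsolve]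

theorem ncard_characteristicVectors_of_transpose_mul_mul_eq_fromBlocks {κ₁ κ₂ : Type*}
    [Fintype κ₁] [DecidableEq κ₁] [Fintype κ₂] {A : Matrix ι ι (ZMod 2)} (hA : A.IsSymm)
    {P : Matrix ι ι (ZMod 2)} (hP : IsUnit P.det) {G₁ : Matrix κ₁ κ₁ (ZMod 2)}
    (hG₁ : IsUnit G₁.det) (e : ι ≃ κ₁ ⊕ κ₂)
    (h : Pᵀ * A * P = (fromBlocks G₁ 0 0 0).submatrix e e) :
    (characteristicVectors A).ncard = 2 ^ Fintype.card κ₂ := by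
  have hPbij : P.mulVec.Bijective :=
    ⟨mulVec_injective_of_isUnit ((isUnit_iff_isUnit_det _).mpr hP),
      mulVec_surjective_iff_isUnit.mpr ((isUnit_iff_isUnit_det _).mpr hP)⟩
  rw [← Set.ncard_preimage_of_bijective hPbij, ← characteristicVectors_transpose_mul_mul hA hP,
    h, characteristicVectors_submatrix, Set.ncard_preimage_of_bijective (Equiv.bijective _),
    characteristicVectors_fromBlocks_zero hG₁, Set.ncard_range_of_injective Sum.elim_injective',
    Nat.card_fun, Nat.card_zmod, Nat.card_eq_fintype_card]

end ZModTwo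

theorem isUnit_det_map_intCast_of_odd {ι : Type*} [Fintype ι] [DecidableEq ι]
    {M : Matrix ι ι ℤ} (h : Odd M.det) : IsUnit (M.map (Int.cast : ℤ → ZMod 2)).det := by
  rw [← Int.cast_det, ZMod.intCast_eq_one_iff_odd.mpr h]
  exact isUnit_one

theorem intCast_dotProduct_mulVec {ι R : Type*} [Fintype ι] [CommRing R]
    (G : Matrix ι ι ℤ) (a b : ι → ℤ) :
    ((a ⬝ᵥ G *ᵥ b : ℤ) : R) =
      (fun i => (a i : R)) ⬝ᵥ G.map (Int.cast : ℤ → R) *ᵥ fun i => (b i : R) := by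
  rw [← eq_intCast (Int.castRingHom R), RingHom.map_dotProduct]
  congr 1
  funext i
  exact RingHom.map_mulVec _ G b i

theorem exists_intCast_eq_div_two_iff_two_dvd (k : ℤ) :
    (∃ m : ℤ, (k : ℚ) / 2 = m) ↔ 2 ∣ k := by
  constructor
  · rintro ⟨m, hm⟩
    exact ⟨m, by exact_mod_cast (div_eq_iff two_ne_zero).mp hm |>.trans (mul_comm _ _)⟩
  · rintro ⟨m, rfl⟩
    exact ⟨m, by push_cast; ring⟩

theorem card_transversal_eq_ncard_image {α β : Type*} {S : Set α} {R : Finset α} (f : α → β)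
    {r : α → α → Prop} (hRS : ∀ x ∈ R, x ∈ S) (hr : ∀ x ∈ S, ∀ y ∈ S, r x y ↔ f x = f y)
    (hR : ∀ x ∈ S, ∃! y, y ∈ R ∧ r x y) :
    R.card = (f '' S).ncard := by
  have hinj : Set.InjOn f R := fun x hx y hy hxy =>
    (hR x (hRS x hx)).unique ⟨hx, (hr x (hRS x hx) x (hRS x hx)).2 rfl⟩
      ⟨hy, (hr x (hRS x hx) y (hRS y hy)).2 hxy⟩
  rw [← Set.ncard_coe_finset, ← hinj.ncard_image]
  refine congrArg Set.ncard (subset_antisymm (Set.image_mono hRS) ?_)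
  rintro _ ⟨x, hx, rfl⟩
  obtain ⟨y, ⟨hy, hxy⟩, -⟩ := hR x hx
  exact ⟨y, hy, ((hr x hx y (hRS y hy)).1 hxy).symm⟩

theorem fromBlocks_map_intCast_zmodTwo_two_smul {κ₁ κ₂ : Type*} (G₁ : Matrix κ₁ κ₁ ℤ)
    (G₂ : Matrix κ₂ κ₂ ℤ) :
    (fromBlocks G₁ 0 0 ((2 : ℤ) • G₂)).map (Int.cast : ℤ → ZMod 2) =
      fromBlocks (G₁.map Int.cast) 0 0 0 := by
  have h2 : ((2 : ℤ) • G₂).map (Int.cast : ℤ → ZMod 2) = 0 := by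
    ext i j
    simp only [map_apply, Matrix.smul_apply, smul_eq_mul, Int.cast_mul, Matrix.zero_apply]
    exact mul_eq_zero_of_left (by decide) _
  simp only [fromBlocks_map, h2, Matrix.map_zero _ Int.cast_zero]

-- `(2 * s i).num` is `2 * s i` whenever the latter is an integer, the only case used.
def twiceModTwo {ι : Type*} (s : ι → ℚ) : ι → ZMod 2 :=
  fun i => ((2 * s i).num : ZMod 2)

section Shadow

variable {n : ℕ}

theorem half_mem_latticeShadow_iff (G : Matrix (Fin n) (Fin n) ℤ) (v : Fin n → ℤ) :
    (fun i => (v i : ℚ) / 2) ∈ latticeShadow G ↔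
      ∀ x : Fin n → ℤ, 2 ∣ v ⬝ᵥ G *ᵥ x - x ⬝ᵥ G *ᵥ x := by
  refine forall_congr' fun x => ?_
  rw [← exists_intCast_eq_div_two_iff_two_dvd]
  have hv : (fun i => (v i : ℚ) / 2) = (2 : ℚ)⁻¹ • fun i => (v i : ℚ) := by
    funext i
    simp [div_eq_inv_mul]
  rw [hv, smul_dotProduct, Int.cast_sub, intCast_dotProduct_mulVec, intCast_dotProduct_mulVec]
  simp only [smul_eq_mul]
  ring_nf

theorem half_mem_latticeShadow_iff_mem_characteristicVectors
    {G : Matrix (Fin n) (Fin n) ℤ} (hG : G.IsSymm) (v : Fin n → ℤ) :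
    (fun i => (v i : ℚ) / 2) ∈ latticeShadow G ↔
      (fun i => (v i : ZMod 2)) ∈ characteristicVectors (G.map (Int.cast : ℤ → ZMod 2)) := by
  set A := G.map (Int.cast : ℤ → ZMod 2)
  have hA : A.IsSymm := hG.map _
  have hcast : ∀ x : Fin n → ℤ, ((v ⬝ᵥ G *ᵥ x - x ⬝ᵥ G *ᵥ x : ℤ) : ZMod 2) =
      (A *ᵥ (fun i => (v i : ZMod 2)) - A.diag) ⬝ᵥ fun i => (x i : ZMod 2) := by
    intro x
    rw [Int.cast_sub, intCast_dotProduct_mulVec, intCast_dotProduct_mulVec, sub_dotProduct,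
      dotProduct_mulVec_self_eq_diag_dotProduct hA, dotProduct_mulVec, ← vecMul_transpose, hA.eq]
  rw [half_mem_latticeShadow_iff, characteristicVectors, Set.mem_ofPred_eq, ← sub_eq_zero,
    ← dotProduct_eq_zero_iff, (ZMod.intCast_surjective.comp_left).forall]
  refine forall_congr' fun x => ?_
  have h := ZMod.intCast_zmod_eq_zero_iff_dvd (v ⬝ᵥ G *ᵥ x - x ⬝ᵥ G *ᵥ x) 2
  rw [hcast, Nat.cast_ofNat] at h
  exact h.symm

theorem isIntVec_two_smul_iff (s : Fin n → ℚ) :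
    IsIntVec ((2 : ℚ) • s) ↔ ∃ v : Fin n → ℤ, s = fun i => (v i : ℚ) / 2 := by
  constructor
  · intro h
    choose v hv using h
    exact ⟨v, funext fun i => by simp [← hv i]⟩
  · rintro ⟨v, rfl⟩ i
    exact ⟨v i, by simp [mul_div_cancel₀]⟩

theorem twiceModTwo_half (v : Fin n → ℤ) :
    twiceModTwo (fun i => (v i : ℚ) / 2) = fun i => (v i : ZMod 2) := by
  funext i
  simp [twiceModTwo, mul_div_cancel₀]

theorem isIntVec_sub_iff_twiceModTwo_eq {s r : Fin n → ℚ} (hs : IsIntVec ((2 : ℚ) • s))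
    (hr : IsIntVec ((2 : ℚ) • r)) : IsIntVec (s - r) ↔ twiceModTwo s = twiceModTwo r := by
  obtain ⟨u, rfl⟩ := (isIntVec_two_smul_iff s).1 hs
  obtain ⟨v, rfl⟩ := (isIntVec_two_smul_iff r).1 hr
  rw [twiceModTwo_half, twiceModTwo_half, funext_iff]
  refine forall_congr' fun i => ?_
  have h : ((fun i => (u i : ℚ) / 2) - fun i => (v i : ℚ) / 2) i = ((u i - v i : ℤ) : ℚ) / 2 := by
    simp only [Pi.sub_apply]
    push_cast
    ring
  rw [h, exists_intCast_eq_div_two_iff_two_dvd, ZMod.intCast_eq_intCast_iff_dvd_sub,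
    Nat.cast_ofNat, dvd_sub_comm]

theorem twiceModTwo_image_halfIntegral_shadow {G : Matrix (Fin n) (Fin n) ℤ} (hG : G.IsSymm) :
    twiceModTwo '' {s | s ∈ latticeShadow G ∧ IsIntVec ((2 : ℚ) • s)} =
      characteristicVectors (G.map (Int.cast : ℤ → ZMod 2)) := by
  ext w
  constructor
  · rintro ⟨s, ⟨hsh, hs⟩, rfl⟩
    obtain ⟨v, rfl⟩ := (isIntVec_two_smul_iff s).1 hs
    rw [twiceModTwo_half]
    exact (half_mem_latticeShadow_iff_mem_characteristicVectors hG v).1 hsh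
  · intro hw
    obtain ⟨v, rfl⟩ := ZMod.intCast_surjective.comp_left w
    exact ⟨_, ⟨(half_mem_latticeShadow_iff_mem_characteristicVectors hG v).2 hw,
      (isIntVec_two_smul_iff _).2 ⟨v, rfl⟩⟩, twiceModTwo_half v⟩

end Shadow

theorem card_two_torsion_cosets_of_shadow
    {n : ℕ} (G : Matrix (Fin n) (Fin n) ℤ) (hG : G.IsSymm)
    (n₂ : ℕ) (M : Matrix (Fin n) (Fin n) ℤ)
    (G₁ : Matrix (Fin n₂) (Fin n₂) ℤ) (G₂ : Matrix (Fin (n - n₂)) (Fin (n - n₂)) ℤ)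
    (e : Fin n ≃ (Fin n₂ ⊕ Fin (n - n₂)))
    (hM : Odd M.det) (hG₁det : Odd G₁.det)
    (hblock : Mᵀ * G * M = (Matrix.fromBlocks G₁ 0 0 ((2 : ℤ) • G₂)).submatrix e e)
    (R : Finset (Fin n → ℚ))
    (hR : ∀ r ∈ R, r ∈ latticeShadow G ∧ IsIntVec ((2 : ℚ) • r))
    (hreps : ∀ s ∈ latticeShadow G, IsIntVec ((2 : ℚ) • s) →
      ∃! r, r ∈ R ∧ IsIntVec (s - r)) :
    R.card = 2 ^ (n - n₂) := by
  set S : Set (Fin n → ℚ) := {s | s ∈ latticeShadow G ∧ IsIntVec ((2 : ℚ) • s)} with hS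
  have hrel : ∀ s ∈ S, ∀ r ∈ S, IsIntVec (s - r) ↔ twiceModTwo s = twiceModTwo r :=
    fun _ hs _ hr => isIntVec_sub_iff_twiceModTwo_eq hs.2 hr.2
  have hblock₂ : (M.map (Int.cast : ℤ → ZMod 2))ᵀ * G.map (Int.cast : ℤ → ZMod 2) *
      M.map (Int.cast : ℤ → ZMod 2) =
      (fromBlocks (G₁.map (Int.cast : ℤ → ZMod 2)) 0 0 0).submatrix e e := by
    have h := congrArg (Int.castRingHom (ZMod 2)).mapMatrix hblock
    rw [map_mul, map_mul] at h
    simpa only [RingHom.mapMatrix_apply, Int.coe_castRingHom, transpose_map, ← submatrix_map,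
      fromBlocks_map_intCast_zmodTwo_two_smul] using h
  rw [card_transversal_eq_ncard_image (S := S) twiceModTwo hR hrel
      fun s hs => hreps s hs.1 hs.2, hS, twiceModTwo_image_halfIntegral_shadow hG,
    ncard_characteristicVectors_of_transpose_mul_mul_eq_fromBlocks (hG.map _)
      (isUnit_det_map_intCast_of_odd hM) (isUnit_det_map_intCast_of_odd hG₁det) e hblock₂,
    Fintype.card_fin]
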